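/- arXiv:2407.19943 — 2 statements merged into one kernel-verified Lean document; each statement's English description precedes it below -/
import Mathlib

section
/- Under the trust bias click model, with α, β random variables in [0,1] determined by a random ranking, c a Bernoulli click with P(c = 1 | ranking) = α·R + β for relevance R ∈ [0,1], and a constant estimate R̂ ∈ [0,1], the variance satisfies Var(c − β − α·R̂) ≤ 2·(E[α] + E[β]). -/
/-!
Conditionally on the ranking `y`, the click is Bernoulli with mean `m = α R + β`, and the residual
takes the values `1 - t` and `-t` with `t = β + α R̂`. Bounding the variance by the second moment,
it suffices to bound the conditional second moment `m (1 - t)² + (1 - m) t² = m + t (t - 2m)`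
pointwise: `m ≤ α + β`, and `t - 2m ≤ α R̂ ≤ 1` gives `t (t - 2m) ≤ t ≤ α + β`.
-/

open Finset

noncomputable def expec {Ω : Type*} [Fintype Ω] (p : Ω → ℝ) (f : Ω → ℝ) : ℝ :=
  ∑ ω, p ω * f ω

noncomputable def vari {Ω : Type*} [Fintype Ω] (p : Ω → ℝ) (f : Ω → ℝ) : ℝ :=
  expec p (fun ω => (f ω - expec p f) ^ 2)

section Moments

variable {Ω : Type*} [Fintype Ω]

lemma expec_add (p f g : Ω → ℝ) : expec p (f + g) = expec p f + expec p g := by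
  simp only [expec, Pi.add_apply, mul_add, sum_add_distrib]

lemma expec_const_mul (p f : Ω → ℝ) (c : ℝ) :
    expec p (fun ω => c * f ω) = c * expec p f := by
  simp only [expec, mul_sum]
  exact sum_congr rfl fun ω _ => by ring

lemma expec_mono {p f g : Ω → ℝ} (hp : ∀ ω, 0 ≤ p ω) (hfg : ∀ ω, f ω ≤ g ω) :
    expec p f ≤ expec p g :=
  sum_le_sum fun ω _ => mul_le_mul_of_nonneg_left (hfg ω) (hp ω)

lemma vari_eq_expec_sq_sub_sq {p : Ω → ℝ} (hsum : ∑ ω, p ω = 1) (f : Ω → ℝ) :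
    vari p f = expec p (fun ω => f ω ^ 2) - expec p f ^ 2 := by
  set E := expec p f
  calc vari p f = ∑ ω, (p ω * f ω ^ 2 - 2 * E * (p ω * f ω) + E ^ 2 * p ω) :=
        sum_congr rfl fun ω _ => by ring
    _ = expec p (fun ω => f ω ^ 2) - 2 * E * E + E ^ 2 * ∑ ω, p ω := by
        rw [sum_add_distrib, sum_sub_distrib, ← mul_sum, ← mul_sum]; rfl
    _ = expec p (fun ω => f ω ^ 2) - E ^ 2 := by rw [hsum]; ring

lemma vari_le_expec_sq {p : Ω → ℝ} (hsum : ∑ ω, p ω = 1) (f : Ω → ℝ) :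
    vari p f ≤ expec p (fun ω => f ω ^ 2) := by
  rw [vari_eq_expec_sq_sub_sq hsum]
  linarith [sq_nonneg (expec p f)]

end Moments

section ClickModel

variable {Y : Type*} [Fintype Y]

def clickMass (p m : Y → ℝ) (z : Y × Bool) : ℝ :=
  p z.1 * (if z.2 then m z.1 else 1 - m z.1)

lemma expec_clickMass (p m : Y → ℝ) (f : Y × Bool → ℝ) :
    expec (clickMass p m) f
      = expec p (fun y => m y * f (y, true) + (1 - m y) * f (y, false)) := by
  simp only [expec, Fintype.sum_prod_type, Fintype.sum_bool, clickMass, if_true,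
    Bool.false_eq_true, if_false]
  exact sum_congr rfl fun y _ => by ring

lemma sum_clickMass (p m : Y → ℝ) : ∑ z, clickMass p m z = ∑ y, p y := by
  simpa [expec] using expec_clickMass p m (fun _ => 1)

end ClickModel

lemma residual_sq_mean_le {a b R Rhat : ℝ} (ha : a ∈ Set.Icc (0:ℝ) 1) (hb : 0 ≤ b)
    (hR : R ∈ Set.Icc (0:ℝ) 1) (hRhat : Rhat ∈ Set.Icc (0:ℝ) 1) :
    (a * R + b) * (1 - b - a * Rhat) ^ 2 + (1 - (a * R + b)) * (0 - b - a * Rhat) ^ 2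
      ≤ 2 * (a + b) := by
  obtain ⟨ha0, ha1⟩ := ha
  obtain ⟨hR0, hR1⟩ := hR
  obtain ⟨hRhat0, hRhat1⟩ := hRhat
  set m := a * R + b
  set t := b + a * Rhat
  have hm : m ≤ a + b := by nlinarith
  have ht0 : 0 ≤ t := by positivity
  have ht : t ≤ a + b := by nlinarith
  have hgap : t - 2 * m ≤ 1 := by nlinarith
  calc m * (1 - b - a * Rhat) ^ 2 + (1 - m) * (0 - b - a * Rhat) ^ 2
      = m + t * (t - 2 * m) := by ring
    _ ≤ m + t := by nlinarith
    _ ≤ 2 * (a + b) := by linarith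

theorem var_dr_residual_le_general {Y : Type*} [Fintype Y] (p : Y → ℝ)
    (hp : ∀ y, 0 ≤ p y) (hsum : ∑ y, p y = 1)
    (α β : Y → ℝ) (R Rhat : ℝ)
    (hα : ∀ y, α y ∈ Set.Icc (0:ℝ) 1) (hβ : ∀ y, β y ∈ Set.Icc (0:ℝ) 1)
    (hR : R ∈ Set.Icc (0:ℝ) 1) (hRhat : Rhat ∈ Set.Icc (0:ℝ) 1) :
    vari (fun z : Y × Bool =>
        p z.1 * (if z.2 then α z.1 * R + β z.1 else 1 - (α z.1 * R + β z.1)))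
      (fun z : Y × Bool => (if z.2 then (1:ℝ) else 0) - β z.1 - α z.1 * Rhat)
      ≤ 2 * (expec p α + expec p β) := by
  change vari (clickMass p fun y => α y * R + β y) _ ≤ _
  have hmass : ∑ z, clickMass p (fun y => α y * R + β y) z = 1 := by
    rw [sum_clickMass, hsum]
  calc _ ≤ expec (clickMass p fun y => α y * R + β y)
          (fun z => ((if z.2 then (1:ℝ) else 0) - β z.1 - α z.1 * Rhat) ^ 2) :=
        vari_le_expec_sq hmass _
    _ = expec p (fun y => (α y * R + β y) * (1 - β y - α y * Rhat) ^ 2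
          + (1 - (α y * R + β y)) * (0 - β y - α y * Rhat) ^ 2) := by
        rw [expec_clickMass]; simp only [if_true, Bool.false_eq_true, if_false]
    _ ≤ expec p (fun y => 2 * (α y + β y)) :=
        expec_mono hp fun y => residual_sq_mean_le (hα y) (hβ y).1 hR hRhat
    _ = 2 * (expec p α + expec p β) := by
        rw [expec_const_mul, ← expec_add]; rfl

/-- Key variance bound of Theorem 4.1: under the trust bias click model with
`P(c = 1 ∣ y) = α(y)·R + β(y)` and an estimate `R̂ ∈ [0,1]`,
`Var(c − β − α·R̂) ≤ 2·(E[α] + E[β])`. The joint space of rankings and clicks is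
`Y × Bool` with mass `q (y, b) = p y · (click prob if b, else its complement)`. -/
theorem var_dr_residual_le {Y : Type*} [Fintype Y] (p : Y → ℝ)
    (hp : ∀ y, 0 ≤ p y) (hsum : ∑ y, p y = 1)
    (α β : Y → ℝ) (R Rhat : ℝ)
    (hα : ∀ y, α y ∈ Set.Icc (0:ℝ) 1) (hβ : ∀ y, β y ∈ Set.Icc (0:ℝ) 1)
    (hR : R ∈ Set.Icc (0:ℝ) 1) (hRhat : Rhat ∈ Set.Icc (0:ℝ) 1)
    (hclick : ∀ y, α y * R + β y ∈ Set.Icc (0:ℝ) 1) :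
    vari (fun z : Y × Bool =>
        p z.1 * (if z.2 then α z.1 * R + β z.1 else 1 - (α z.1 * R + β z.1)))
      (fun z : Y × Bool => (if z.2 then (1:ℝ) else 0) - β z.1 - α z.1 * Rhat)
      ≤ 2 * (expec p α + expec p β) :=
  var_dr_residual_le_general p hp hsum α β R Rhat hα hβ hR hRhat
end

section
/- For the PRPO objective with parameters 0 < ε₋ ≤ 1 ≤ ε₊, the gap between the objective value at any ranking y and at the logging ranking y₀ is bounded: Σ_d f(ω(d|y)/ω₀(d), ε₋, ε₊, r(d)) − Σ_d r(d) ≤ (ε₊ − 1)·Σ_{d: r(d)>0} r(d) + (1 − ε₋)·Σ_{d: r(d)<0} (−r(d)). -/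
open Finset

/-- The PRPO clipping function (Eq. 20). -/
noncomputable def prpoClip (x epsMinus epsPlus r : ℝ) : ℝ :=
  if 0 ≤ r then min x epsPlus * r else max x epsMinus * r

section prpoClip

variable {x epsMinus epsPlus r : ℝ}

theorem prpoClip_le_of_nonneg (hr : 0 ≤ r) : prpoClip x epsMinus epsPlus r ≤ epsPlus * r := by
  rw [prpoClip, if_pos hr]
  exact mul_le_mul_of_nonneg_right (min_le_right _ _) hr

theorem prpoClip_le_of_neg (hr : r < 0) : prpoClip x epsMinus epsPlus r ≤ epsMinus * r := by
  rw [prpoClip, if_neg hr.not_ge]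
  exact mul_le_mul_of_nonpos_right (le_max_right _ _) hr.le

theorem prpoClip_sub_le :
    prpoClip x epsMinus epsPlus r - r
      ≤ (epsPlus - 1) * (if 0 < r then r else 0)
        + (1 - epsMinus) * (if r < 0 then -r else 0) := by
  rcases lt_trichotomy r 0 with hr | rfl | hr
  · have : prpoClip x epsMinus epsPlus r ≤ epsMinus * r := prpoClip_le_of_neg hr
    simp only [hr, hr.not_gt, if_true, if_false]
    linarith
  · simp [prpoClip]
  · have : prpoClip x epsMinus epsPlus r ≤ epsPlus * r := prpoClip_le_of_nonneg hr.le
    simp only [hr, hr.not_gt, if_true, if_false]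
    linarith

end prpoClip

theorem prpo_gap_bounded_general {D : Type*} [Fintype D]
    (epsMinus epsPlus : ℝ) (ratio r : D → ℝ) :
    (∑ d, prpoClip (ratio d) epsMinus epsPlus (r d)) - ∑ d, r d
      ≤ (epsPlus - 1) * ∑ d ∈ Finset.univ.filter (fun d => 0 < r d), r d
        + (1 - epsMinus) * ∑ d ∈ Finset.univ.filter (fun d => r d < 0), (- r d) := by
  calc (∑ d, prpoClip (ratio d) epsMinus epsPlus (r d)) - ∑ d, r d
      = ∑ d, (prpoClip (ratio d) epsMinus epsPlus (r d) - r d) := (sum_sub_distrib ..).symm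
    _ ≤ ∑ d, ((epsPlus - 1) * (if 0 < r d then r d else 0)
          + (1 - epsMinus) * (if r d < 0 then -r d else 0)) :=
        sum_le_sum fun _ _ => prpoClip_sub_le
    _ = _ := by rw [sum_add_distrib, ← mul_sum, ← mul_sum, sum_filter, sum_filter]

/-- The gap between the PRPO objective at any ranking (weight ratios `ratio d ≥ 0`)
and at the logging ranking (where the objective equals `Σ_d r(d)`) is bounded by
`(ε₊ − 1)·Σ_{r(d)>0} r(d) + (1 − ε₋)·Σ_{r(d)<0} (−r(d))`. -/
theorem prpo_gap_bounded {D : Type*} [Fintype D]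
    (epsMinus epsPlus : ℝ) (h0 : 0 < epsMinus) (h1 : epsMinus ≤ 1)
    (h2 : 1 ≤ epsPlus) (ratio r : D → ℝ) (hratio : ∀ d, 0 ≤ ratio d) :
    (∑ d, prpoClip (ratio d) epsMinus epsPlus (r d)) - ∑ d, r d
      ≤ (epsPlus - 1) * ∑ d ∈ Finset.univ.filter (fun d => 0 < r d), r d
        + (1 - epsMinus) * ∑ d ∈ Finset.univ.filter (fun d => r d < 0), (- r d) :=
  prpo_gap_bounded_general epsMinus epsPlus ratio r
end
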